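/- A thread P in BTA^∞ is regular (i.e., has finitely many residual threads) if and only if P is a component of the solution of some finite linear recursive specification. -/

import Mathlib

/-- Basic Thread Algebra: freely generated by `S`, `D` and postconditional
composition `pcc P a Q` (i.e. `P ⊴ a ⊵ Q`). -/
inductive BTA (A : Type) : Type
  | S : BTA A
  | D : BTA A
  | pcc : BTA A → A → BTA A → BTA A

namespace BTA

variable {A : Type}

/-- The approximation operator `π`. -/
def pi : ℕ → BTA A → BTA A
  | 0, _ => D
  | _+1, S => S
  | _+1, D => D
  | n+1, pcc P a Q => pcc (pi n P) a (pi n Q)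

end BTA
theorem BTA.pi_pi {A : Type} : ∀ (n : ℕ) (P : BTA A),
    BTA.pi n (BTA.pi (n+1) P) = BTA.pi n P := by
  intro n
  induction n with
  | zero => intro P; rfl
  | succ n ih => intro P; cases P <;> simp [BTA.pi, ih]

/-- `BTA^∞`: the completion of BTA, given by projective sequences. -/
def BTAinf (A : Type) : Type := {f : ℕ → BTA A // ∀ n, BTA.pi n (f (n+1)) = f n}

/-- The thread `S` in `BTA^∞`. -/
def Sinf (A : Type) : BTAinf A :=
  ⟨fun n => match n with | 0 => BTA.D | _+1 => BTA.S, by intro n; cases n <;> rfl⟩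

/-- The thread `D` in `BTA^∞`. -/
def Dinf (A : Type) : BTAinf A := ⟨fun _ => BTA.D, by intro n; cases n <;> rfl⟩

/-- Postconditional composition `x ⊴ a ⊵ y` on `BTA^∞`. -/
def pccInf {A : Type} (a : A) (x y : BTAinf A) : BTAinf A :=
  ⟨fun n => match n with
    | 0 => BTA.D
    | n+1 => BTA.pcc (x.1 n) a (y.1 n),
   by intro n
      cases n with
      | zero => rfl
      | succ n =>
          show BTA.pi (n+1) (BTA.pcc (x.1 (n+1)) a (y.1 (n+1))) = _
          simp [BTA.pi, x.2 n, y.2 n]⟩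

/-- The right-hand sides of a finite linear recursive specification with
index set `Fin n`: each is `S`, `D`, or `x_j ⊴ a ⊵ x_k`. -/
inductive LinTerm (A : Type) (n : ℕ) : Type
  | S : LinTerm A n
  | D : LinTerm A n
  | pcc (j : Fin n) (a : A) (k : Fin n) : LinTerm A n

/-- `P` is a solution of the finite linear recursive specification `t`. -/
def IsSolution {A : Type} {n : ℕ} (t : Fin n → LinTerm A n)
    (P : Fin n → BTAinf A) : Prop :=
  ∀ i : Fin n,
    match t i with
    | LinTerm.S => P i = Sinf A
    | LinTerm.D => P i = Dinf A
    | LinTerm.pcc j a k => P i = pccInf a (P j) (P k)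

/-- The residual threads of `P`: the least set containing `P` and closed
under taking the two branches of a postconditional composition. -/
inductive IsRes {A : Type} (P : BTAinf A) : BTAinf A → Prop
  | refl : IsRes P P
  | left (a : A) (Q R : BTAinf A) : IsRes P (pccInf a Q R) → IsRes P Q
  | right (a : A) (Q R : BTAinf A) : IsRes P (pccInf a Q R) → IsRes P R

/-- A thread is regular iff it has finitely many residual threads. -/
def Regular {A : Type} (P : BTAinf A) : Prop := {Q : BTAinf A | IsRes P Q}.Finite

/-! Res(P) is the least set containing P whose members' branches stay in the set. The components of
a solution of a linear specification form such a set, so they contain all residuals of each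
component. Conversely, every thread is `S`, `D` or `Q ⊴ a ⊵ R`, which can be read off from its
first approximation; enumerating a finite Res(P) and recording this head of each residual, with
its branches replaced by their indices, gives a linear specification solved by the enumeration. -/

namespace BTA

variable {A : Type}

theorem pi_pi_of_le : ∀ {m n : ℕ}, m ≤ n → ∀ y : BTA A, pi m (pi n y) = pi m y
  | 0, _, _, _ => rfl
  | _ + 1, _ + 1, _, S => rfl
  | _ + 1, _ + 1, _, D => rfl
  | _ + 1, _ + 1, h, pcc u a v => by
      simp only [pi, pi_pi_of_le (Nat.le_of_succ_le_succ h)]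

-- The default `D` is what makes `left` and `right` commute with the approximations.
def left : BTA A → BTA A
  | pcc u _ _ => u
  | _ => D

def right : BTA A → BTA A
  | pcc _ _ v => v
  | _ => D

theorem pi_left (n : ℕ) (y : BTA A) : pi n (left y) = left (pi (n + 1) y) := by
  cases n <;> cases y <;> rfl

theorem pi_right (n : ℕ) (y : BTA A) : pi n (right y) = right (pi (n + 1) y) := by
  cases n <;> cases y <;> rfl

theorem eq_S_of_pi_one {y : BTA A} (h : pi 1 y = S) : y = S := by
  cases y <;> simp_all [pi]

theorem eq_D_of_pi_one {y : BTA A} (h : pi 1 y = D) : y = D := by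
  cases y <;> simp_all [pi]

theorem eq_pcc_of_pi_one {y u v : BTA A} {a : A} (h : pi 1 y = pcc u a v) :
    y = pcc (left y) a (right y) := by
  cases y <;> simp_all [pi, left, right]

end BTA

namespace BTAinf

variable {A : Type}

theorem ext {x y : BTAinf A} (h : ∀ n, x.1 n = y.1 n) : x = y :=
  Subtype.ext (funext h)

theorem apply_zero (x : BTAinf A) : x.1 0 = BTA.D :=
  (x.2 0).symm

theorem pi_apply_of_le (x : BTAinf A) {m n : ℕ} (h : m ≤ n) : BTA.pi m (x.1 n) = x.1 m := by
  induction n, h using Nat.le_induction with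
  | base => rw [← x.2 m, BTA.pi_pi_of_le le_rfl]
  | succ n hmn ih => rw [← BTA.pi_pi_of_le hmn, x.2 n, ih]

def left (x : BTAinf A) : BTAinf A :=
  ⟨fun n => BTA.left (x.1 (n + 1)), fun n => by simp only [BTA.pi_left, x.2]⟩

def right (x : BTAinf A) : BTAinf A :=
  ⟨fun n => BTA.right (x.1 (n + 1)), fun n => by simp only [BTA.pi_right, x.2]⟩

theorem eq_Sinf_of_apply_one {x : BTAinf A} (h : x.1 1 = BTA.S) : x = Sinf A :=
  ext fun
    | 0 => x.apply_zero
    | n + 1 => BTA.eq_S_of_pi_one ((x.pi_apply_of_le n.succ_pos).trans h)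

theorem eq_Dinf_of_apply_one {x : BTAinf A} (h : x.1 1 = BTA.D) : x = Dinf A :=
  ext fun
    | 0 => x.apply_zero
    | n + 1 => BTA.eq_D_of_pi_one ((x.pi_apply_of_le n.succ_pos).trans h)

theorem eq_pccInf_of_apply_one {x : BTAinf A} {u v : BTA A} {a : A}
    (h : x.1 1 = BTA.pcc u a v) : x = pccInf a x.left x.right :=
  ext fun
    | 0 => x.apply_zero
    | n + 1 => BTA.eq_pcc_of_pi_one ((x.pi_apply_of_le n.succ_pos).trans h)

theorem eq_Sinf_or_eq_Dinf_or_exists_eq_pccInf (x : BTAinf A) :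
    x = Sinf A ∨ x = Dinf A ∨ ∃ a Q R, x = pccInf a Q R := by
  rcases h : x.1 1 with _ | _ | ⟨u, a, v⟩
  · exact .inl (eq_Sinf_of_apply_one h)
  · exact .inr (.inl (eq_Dinf_of_apply_one h))
  · exact .inr (.inr ⟨a, _, _, eq_pccInf_of_apply_one h⟩)

end BTAinf

section

variable {A : Type}

theorem pccInf_inj {a a' : A} {Q R Q' R' : BTAinf A} :
    pccInf a Q R = pccInf a' Q' R' ↔ a = a' ∧ Q = Q' ∧ R = R' := by
  refine ⟨fun h => ?_, by rintro ⟨rfl, rfl, rfl⟩; rfl⟩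
  have hn (n : ℕ) := BTA.pcc.inj (congrArg (fun x : BTAinf A => x.1 (n + 1)) h)
  exact ⟨(hn 0).2.1, BTAinf.ext fun n => (hn n).1, BTAinf.ext fun n => (hn n).2.2⟩

theorem Sinf_ne_pccInf (a : A) (Q R : BTAinf A) : Sinf A ≠ pccInf a Q R :=
  fun h => nomatch congrArg (fun x : BTAinf A => x.1 1) h

theorem Dinf_ne_pccInf (a : A) (Q R : BTAinf A) : Dinf A ≠ pccInf a Q R :=
  fun h => nomatch congrArg (fun x : BTAinf A => x.1 1) h

def LinTerm.eval {n : ℕ} (Q : Fin n → BTAinf A) : LinTerm A n → BTAinf A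
  | .S => Sinf A
  | .D => Dinf A
  | .pcc j a k => pccInf a (Q j) (Q k)

theorem isSolution_iff {n : ℕ} {t : Fin n → LinTerm A n} {Q : Fin n → BTAinf A} :
    IsSolution t Q ↔ ∀ i, Q i = (t i).eval Q :=
  forall_congr' fun i => by cases t i <;> rfl

def BranchClosed (s : Set (BTAinf A)) : Prop :=
  ∀ a Q R, pccInf a Q R ∈ s → Q ∈ s ∧ R ∈ s

theorem branchClosed_setOf_isRes (P : BTAinf A) : BranchClosed {Q | IsRes P Q} :=
  fun a Q R h => ⟨.left a Q R h, .right a Q R h⟩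

theorem BranchClosed.setOf_isRes_subset {s : Set (BTAinf A)} (hs : BranchClosed s) {P : BTAinf A}
    (hP : P ∈ s) : {Q | IsRes P Q} ⊆ s := by
  intro Q hQ
  induction hQ with
  | refl => exact hP
  | left a Q R _ ih => exact (hs a Q R ih).1
  | right a Q R _ ih => exact (hs a Q R ih).2

theorem IsSolution.branchClosed_range {n : ℕ} {t : Fin n → LinTerm A n} {Q : Fin n → BTAinf A}
    (h : IsSolution t Q) : BranchClosed (Set.range Q) := by
  rintro a U V ⟨i, hi⟩
  have hi' : (t i).eval Q = pccInf a U V := (isSolution_iff.1 h i).symm.trans hi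
  rcases hti : t i with _ | _ | ⟨j, b, k⟩ <;> rw [hti] at hi'
  · exact absurd hi' (Sinf_ne_pccInf a U V)
  · exact absurd hi' (Dinf_ne_pccInf a U V)
  · obtain ⟨-, hj, hk⟩ := pccInf_inj.1 hi'
    exact ⟨⟨j, hj⟩, ⟨k, hk⟩⟩

theorem exists_isSolution_of_branchClosed_range {n : ℕ} (Q : Fin n → BTAinf A)
    (hQ : BranchClosed (Set.range Q)) : ∃ t : Fin n → LinTerm A n, IsSolution t Q := by
  have head (i : Fin n) : ∃ τ : LinTerm A n, Q i = τ.eval Q := by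
    rcases (Q i).eq_Sinf_or_eq_Dinf_or_exists_eq_pccInf with h | h | ⟨a, U, V, h⟩
    · exact ⟨.S, h⟩
    · exact ⟨.D, h⟩
    · obtain ⟨⟨j, rfl⟩, ⟨k, rfl⟩⟩ := hQ a U V (h ▸ ⟨i, rfl⟩)
      exact ⟨.pcc j a k, h⟩
  choose t ht using head
  exact ⟨t, isSolution_iff.2 ht⟩

end

/-- A thread `P ∈ BTA^∞` is regular iff it is a component of the solution of
some finite linear recursive specification. -/
theorem regular_iff_solution {A : Type} (P : BTAinf A) :
    Regular P ↔
      ∃ (n : ℕ) (t : Fin n → LinTerm A n) (Q : Fin n → BTAinf A) (i : Fin n),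
        IsSolution t Q ∧ P = Q i := by
  constructor
  · intro hP
    obtain ⟨n, Q, hQ⟩ := hP.fin_embedding
    obtain ⟨t, ht⟩ := exists_isSolution_of_branchClosed_range Q
      (hQ ▸ branchClosed_setOf_isRes P)
    obtain ⟨i, hi⟩ : P ∈ Set.range Q := hQ ▸ IsRes.refl
    exact ⟨n, t, Q, i, ht, hi.symm⟩
  · rintro ⟨n, t, Q, i, ht, rfl⟩
    exact (Set.finite_range Q).subset (ht.branchClosed_range.setOf_isRes_subset ⟨i, rfl⟩)
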